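/- arXiv:1108.6130 — 4 statements merged into one kernel-verified Lean document; each statement's English description precedes it below -/
import Mathlib

section
/- Suppose the sequence of zeros z_n is periodic of period two: z_n = α₁ for n odd and z_n = α₂ for n even, with α₁, α₂ ∈ 𝔻, and suppose the monic OPUC Φ_n satisfy Φ_n(z_n) = 0 for all n ≥ 1. Then Φ₁(0) = -α₁, Φ₂(0) = -α₂·C where C = (α₂ - α₁)/(1 - conj(α₁)·α₂), and for all n ≥ 3, Φ_n(0) = (-1)^{n-1}·C·α₁^{(n-1)/2}·α₂^{(n-1)/2} if n is odd, and Φ_n(0) = (-1)^{n-1}·C·α₁^{n/2 - 1}·α₂^{n/2} if n is even. -/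
/-!
For `‖z‖ ≤ 1` the Szegő recurrence preserves `‖Φₙ(z)‖ ≤ ‖Φₙ*(z)‖` and `Φₙ*(z) ≠ 0`, so the zero
condition `Φₙ₊₁(zₙ₊₁) = 0` determines `Φₙ₊₁(0) = -zₙ₊₁ Φₙ(zₙ₊₁) / Φₙ*(zₙ₊₁)`. When `zₙ = zₙ₊₂ = z`,
the recurrence at a zero `z` of `Φₙ` gives `Φₙ₊₁(z) = Φₙ₊₁(0) Φₙ*(z)` and `Φₙ₊₁*(z) = Φₙ*(z)`,
hence `Φₙ₊₂(0) = -z Φₙ₊₁(0)`. With period-two zeros the Verblunsky coefficients are therefore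
multiplied alternately by `-α₁` and `-α₂` from `Φ₂(0) = -α₂ C` on.
-/

open ComplexConjugate

namespace Szego

/-- `‖s + ā w‖² - ‖w + a s‖² = (1 - ‖a‖²) (‖s‖² - ‖w‖²)`. -/
theorem norm_add_mul_le {a w s : ℂ} (ha : ‖a‖ ≤ 1) (hws : ‖w‖ ≤ ‖s‖) :
    ‖w + a * s‖ ≤ ‖s + conj a * w‖ := by
  have hid : ‖s + conj a * w‖ ^ 2 - ‖w + a * s‖ ^ 2 = (1 - ‖a‖ ^ 2) * (‖s‖ ^ 2 - ‖w‖ ^ 2) := by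
    apply Complex.ofReal_injective
    push_cast
    simp only [← Complex.mul_conj', map_add, map_mul, Complex.conj_conj]
    ring
  have ha2 : ‖a‖ ^ 2 ≤ 1 := pow_le_one₀ (norm_nonneg a) ha
  have hws2 : ‖w‖ ^ 2 ≤ ‖s‖ ^ 2 := pow_le_pow_left₀ (norm_nonneg w) hws 2
  refine pow_le_pow_iff_left₀ (norm_nonneg _) (norm_nonneg _) two_ne_zero |>.mp ?_
  nlinarith [mul_nonneg (sub_nonneg.mpr ha2) (sub_nonneg.mpr hws2)]

theorem add_conj_mul_ne_zero {a w s : ℂ} (ha : ‖a‖ < 1) (hws : ‖w‖ ≤ ‖s‖) (hs : s ≠ 0) :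
    s + conj a * w ≠ 0 := by
  intro h
  have hs' : ‖s‖ = ‖a‖ * ‖w‖ := by
    rw [eq_neg_of_add_eq_zero_left h, norm_neg, norm_mul, Complex.norm_conj]
  have hpos : 0 < ‖s‖ := norm_pos_iff.mpr hs
  nlinarith [norm_nonneg a, norm_nonneg w]

variable {Φ Φs : ℕ → ℂ → ℂ} {a : ℕ → ℂ} {z : ℂ}

theorem norm_le_norm_star_and_star_ne_zero (hz : ‖z‖ ≤ 1) (ha : ∀ n, ‖a (n + 1)‖ < 1)
    (h0 : Φ 0 z = 1) (h0s : Φs 0 z = 1)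
    (hrec : ∀ n, Φ (n + 1) z = z * Φ n z + a (n + 1) * Φs n z)
    (hrecs : ∀ n, Φs (n + 1) z = Φs n z + conj (a (n + 1)) * z * Φ n z) (n : ℕ) :
    ‖Φ n z‖ ≤ ‖Φs n z‖ ∧ Φs n z ≠ 0 := by
  induction n with
  | zero => simp [h0, h0s]
  | succ n ih =>
    have hzΦ : ‖z * Φ n z‖ ≤ ‖Φs n z‖ := by
      rw [norm_mul]
      exact (mul_le_of_le_one_left (norm_nonneg _) hz).trans ih.1
    rw [hrec, hrecs, mul_assoc]
    exact ⟨norm_add_mul_le (ha n).le hzΦ, add_conj_mul_ne_zero (ha n) hzΦ ih.2⟩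

theorem coeff_zero_eq_of_isRoot {n : ℕ}
    (hrec : Φ (n + 1) z = z * Φ n z + Φ (n + 1) 0 * Φs n z)
    (hroot : Φ (n + 1) z = 0) (hne : Φs n z ≠ 0) :
    Φ (n + 1) 0 = -(z * Φ n z) / Φs n z := by
  rw [eq_div_iff hne]
  linear_combination hroot - hrec

theorem coeff_zero_succ_eq_of_isRoot_of_isRoot {n : ℕ}
    (hrec : ∀ n, Φ (n + 1) z = z * Φ n z + Φ (n + 1) 0 * Φs n z)
    (hrecs : ∀ n, Φs (n + 1) z = Φs n z + conj (Φ (n + 1) 0) * z * Φ n z)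
    (hroot : Φ n z = 0) (hroot' : Φ (n + 2) z = 0) (hne : Φs n z ≠ 0) :
    Φ (n + 2) 0 = -z * Φ (n + 1) 0 := by
  have hΦ : Φ (n + 1) z = Φ (n + 1) 0 * Φs n z := by rw [hrec, hroot]; ring
  have hΦs : Φs (n + 1) z = Φs n z := by rw [hrecs, hroot]; ring
  rw [coeff_zero_eq_of_isRoot (hrec _) hroot' (hΦs ▸ hne), hΦ, hΦs]
  field_simp

end Szego

theorem alternating_product_pair {v : ℕ → ℂ} {α₁ α₂ C : ℂ} (h2 : v 2 = -α₂ * C)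
    (hstep : ∀ m, 1 ≤ m → v (m + 2) = -(if Odd m then α₁ else α₂) * v (m + 1)) (k : ℕ) :
    v (2 * k + 2) = -α₂ * C * (α₁ * α₂) ^ k ∧ v (2 * k + 3) = C * (α₁ * α₂) ^ (k + 1) := by
  have hodd : ∀ k, v (2 * k + 3) = -α₁ * v (2 * k + 2) := fun k => by
    simpa using hstep (2 * k + 1) (by omega)
  induction k with
  | zero => exact ⟨by simpa using h2, by rw [hodd, h2]; ring⟩
  | succ k ih =>
    have heven : v (2 * (k + 1) + 2) = -α₂ * v (2 * k + 3) := by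
      have hpar : ¬ Odd (2 * k + 2) := Nat.not_odd_iff_even.mpr ⟨k + 1, by ring⟩
      simpa [hpar, mul_add] using hstep (2 * k + 2) (by omega)
    refine ⟨by rw [heven, ih.2]; ring, ?_⟩
    rw [hodd, heven, ih.2]; ring

theorem alternating_product_eq {v : ℕ → ℂ} {α₁ α₂ C : ℂ} (h2 : v 2 = -α₂ * C)
    (hstep : ∀ m, 1 ≤ m → v (m + 2) = -(if Odd m then α₁ else α₂) * v (m + 1))
    {n : ℕ} (hn : 2 ≤ n) :
    (Odd n → v n = (-1) ^ (n - 1) * C * α₁ ^ ((n - 1) / 2) * α₂ ^ ((n - 1) / 2)) ∧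
      (Even n → v n = (-1) ^ (n - 1) * C * α₁ ^ (n / 2 - 1) * α₂ ^ (n / 2)) := by
  refine ⟨fun hodd => ?_, fun heven => ?_⟩
  · obtain ⟨k, rfl⟩ : ∃ k, n = 2 * k + 3 := ⟨n / 2 - 1, by rcases hodd with ⟨j, rfl⟩; omega⟩
    rw [(alternating_product_pair h2 hstep k).2, show 2 * k + 3 - 1 = 2 * (k + 1) by omega,
      Nat.mul_div_cancel_left _ two_pos, pow_mul, neg_one_sq, one_pow]
    ring
  · obtain ⟨k, rfl⟩ : ∃ k, n = 2 * k + 2 := ⟨n / 2 - 1, by rcases heven with ⟨j, rfl⟩; omega⟩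
    rw [(alternating_product_pair h2 hstep k).1, show 2 * k + 2 - 1 = 2 * k + 1 by omega,
      show (2 * k + 2) / 2 = k + 1 by omega, Nat.add_sub_cancel, pow_succ, pow_mul, neg_one_sq,
      one_pow]
    ring

theorem stmt_9 (α₁ α₂ : ℂ) (hα₁ : ‖α₁‖ < 1) (hα₂ : ‖α₂‖ < 1)
    (Φ Φs : ℕ → ℂ → ℂ)
    (h0 : ∀ z, Φ 0 z = 1) (h0s : ∀ z, Φs 0 z = 1)
    (hrec : ∀ n z, Φ (n + 1) z = z * Φ n z + Φ (n + 1) 0 * Φs n z)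
    (hrecs : ∀ n z, Φs (n + 1) z = Φs n z + (starRingEnd ℂ) (Φ (n + 1) 0) * z * Φ n z)
    (hVer : ∀ n, ‖Φ (n + 1) 0‖ < 1)
    (hzero : ∀ n, 1 ≤ n → Φ n (if Odd n then α₁ else α₂) = 0) :
    Φ 1 0 = -α₁ ∧
    Φ 2 0 = -α₂ * ((α₂ - α₁) / (1 - (starRingEnd ℂ) α₁ * α₂)) ∧
    ∀ n, 3 ≤ n →
      (Odd n → Φ n 0 = (-1) ^ (n - 1) * ((α₂ - α₁) / (1 - (starRingEnd ℂ) α₁ * α₂))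
          * α₁ ^ ((n - 1) / 2) * α₂ ^ ((n - 1) / 2)) ∧
      (Even n → Φ n 0 = (-1) ^ (n - 1) * ((α₂ - α₁) / (1 - (starRingEnd ℂ) α₁ * α₂))
          * α₁ ^ (n / 2 - 1) * α₂ ^ (n / 2)) := by
  have hne : ∀ z : ℂ, ‖z‖ < 1 → ∀ n, Φs n z ≠ 0 := fun z hz n =>
    (Szego.norm_le_norm_star_and_star_ne_zero hz.le (a := fun n => Φ n 0) hVer (h0 z) (h0s z)
      (fun n => hrec n z) (fun n => hrecs n z) n).2
  have h1 : Φ 1 0 = -α₁ := by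
    simpa [h0, h0s] using Szego.coeff_zero_eq_of_isRoot (hrec 0 α₁) (by simpa using hzero 1 le_rfl)
      (hne α₁ hα₁ 0)
  have h1z : Φ 1 α₂ = α₂ - α₁ := by rw [hrec, h0, h0s, h1]; ring
  have h1s : Φs 1 α₂ = 1 - conj α₁ * α₂ := by
    rw [hrecs, h0, h0s, h1, map_neg]
    ring
  have h2 : Φ 2 0 = -α₂ * ((α₂ - α₁) / (1 - conj α₁ * α₂)) := by
    have hroot : Φ 2 α₂ = 0 := by simpa [show ¬ Odd 2 by decide] using hzero 2 one_le_two
    rw [Szego.coeff_zero_eq_of_isRoot (hrec 1 α₂) hroot (hne α₂ hα₂ 1), h1z, h1s]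
    ring
  have hstep : ∀ m, 1 ≤ m → Φ (m + 2) 0 = -(if Odd m then α₁ else α₂) * Φ (m + 1) 0 := by
    intro m hm
    have hperiod : Odd (m + 2) ↔ Odd m := by simp [Nat.odd_add]
    have hroot' := hzero (m + 2) (by omega)
    rw [if_congr hperiod rfl rfl] at hroot'
    refine Szego.coeff_zero_succ_eq_of_isRoot_of_isRoot (hrec · _) (hrecs · _) (hzero m hm) hroot' ?_
    split_ifs
    exacts [hne α₁ hα₁ m, hne α₂ hα₂ m]
  exact ⟨h1, h2, fun n hn =>
    alternating_product_eq (v := fun n => Φ n 0) h2 hstep (by omega)⟩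
end

section
/- Fix r ∈ (0,1] and define a₂ = a₃ = 2r²/(1 + r²), a_{n+1} = r·(r·a_{n-1} + a_n)/(1 + r·a_{n-1}·a_n) for n ≥ 3. Then the sequence (a_n) is monotone decreasing. -/
/-!
The recurrence is `a (n + 1) = f (a (n - 1)) (a n)` with `f x y = r (r x + y) / (1 + r x y)`.
For `0 ≤ r ≤ 1` the map `f` sends `[0, 1]²` into `[0, 1]` and is monotone in each argument there,
so `a (n + 1) ≤ a n` and `a n ≤ a (n - 1)` give `a (n + 2) ≤ a (n + 1)`. It remains to start the
induction, i.e. to check `a 4 = f t t ≤ t` for `t = 2 r² / (1 + r²)`, which is the polynomial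
inequality `(r² + r - 1) (1 + r²)² ≤ 4 r⁵`.
-/

theorem antitone_of_monotone_recurrence {α : Type*} [Preorder α] {s : Set α} {g : α → α → α}
    (hg_mem : ∀ x ∈ s, ∀ y ∈ s, g x y ∈ s)
    (hg_mono : ∀ x₁ ∈ s, ∀ x₂ ∈ s, ∀ y₁ ∈ s, ∀ y₂ ∈ s, x₁ ≤ x₂ → y₁ ≤ y₂ → g x₁ y₁ ≤ g x₂ y₂)
    {u : ℕ → α} (hu : ∀ n, u (n + 2) = g (u n) (u (n + 1)))
    (h0 : u 0 ∈ s) (h1 : u 1 ∈ s) (h10 : u 1 ≤ u 0) (h21 : u 2 ≤ u 1) : Antitone u := by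
  have hmem : ∀ n, u n ∈ s ∧ u (n + 1) ∈ s := by
    intro n
    induction n with
    | zero => exact ⟨h0, h1⟩
    | succ n ih => exact ⟨ih.2, hu n ▸ hg_mem _ ih.1 _ ih.2⟩
  have hstep : ∀ n, u (n + 1) ≤ u n ∧ u (n + 2) ≤ u (n + 1) := by
    intro n
    induction n with
    | zero => exact ⟨h10, h21⟩
    | succ n ih =>
      refine ⟨ih.2, ?_⟩
      calc u (n + 1 + 2) = g (u (n + 1)) (u (n + 2)) := hu (n + 1)
        _ ≤ g (u n) (u (n + 1)) :=
          hg_mono _ (hmem (n + 1)).1 _ (hmem n).1 _ (hmem (n + 1)).2 _ (hmem n).2 ih.1 ih.2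
        _ = u (n + 2) := (hu n).symm
  exact antitone_nat_of_succ_le fun n => (hstep n).1

noncomputable def stepMap (r x y : ℝ) : ℝ := r * (r * x + y) / (1 + r * x * y)

section stepMap

variable {r : ℝ}

lemma stepMap_mono_left (hr : 0 ≤ r) {x₁ x₂ y : ℝ} (hx₁ : 0 ≤ x₁) (hx : x₁ ≤ x₂) (hy₀ : 0 ≤ y)
    (hy₁ : y ≤ 1) : stepMap r x₁ y ≤ stepMap r x₂ y := by
  have hx₂ : 0 ≤ x₂ := hx₁.trans hx
  unfold stepMap
  rw [div_le_div_iff₀ (by positivity) (by positivity)]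
  -- the cross-multiplied difference is `r² (x₂ - x₁) (1 - y²)`
  nlinarith [mul_nonneg (mul_nonneg (sq_nonneg r) (sub_nonneg.2 hx))
    (sub_nonneg.2 (pow_le_one₀ (n := 2) hy₀ hy₁))]

lemma stepMap_mono_right (hr : 0 ≤ r) {x y₁ y₂ : ℝ} (hx₀ : 0 ≤ x) (hrx : r * x ≤ 1) (hy₁ : 0 ≤ y₁)
    (hy : y₁ ≤ y₂) : stepMap r x y₁ ≤ stepMap r x y₂ := by
  have hy₂ : 0 ≤ y₂ := hy₁.trans hy
  unfold stepMap
  rw [div_le_div_iff₀ (by positivity) (by positivity)]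
  -- the cross-multiplied difference is `r (y₂ - y₁) (1 - (r x)²)`
  nlinarith [mul_nonneg (mul_nonneg hr (sub_nonneg.2 hy))
    (sub_nonneg.2 (pow_le_one₀ (n := 2) (by positivity) hrx))]

lemma stepMap_mono (hr₀ : 0 ≤ r) (hr₁ : r ≤ 1) {x₁ x₂ y₁ y₂ : ℝ} (hx₁ : x₁ ∈ Set.Icc (0 : ℝ) 1)
    (hx₂ : x₂ ∈ Set.Icc (0 : ℝ) 1) (hy₁ : y₁ ∈ Set.Icc (0 : ℝ) 1) (hx : x₁ ≤ x₂) (hy : y₁ ≤ y₂) :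
    stepMap r x₁ y₁ ≤ stepMap r x₂ y₂ :=
  (stepMap_mono_left hr₀ hx₁.1 hx hy₁.1 hy₁.2).trans <|
    stepMap_mono_right hr₀ hx₂.1 (mul_le_one₀ hr₁ hx₂.1 hx₂.2) hy₁.1 hy

lemma stepMap_mem_Icc (hr₀ : 0 ≤ r) (hr₁ : r ≤ 1) {x y : ℝ} (hx : x ∈ Set.Icc (0 : ℝ) 1)
    (hy : y ∈ Set.Icc (0 : ℝ) 1) : stepMap r x y ∈ Set.Icc (0 : ℝ) 1 := by
  have hx₀ := hx.1
  have hy₀ := hy.1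
  refine ⟨by unfold stepMap; positivity, ?_⟩
  have h11 : stepMap r 1 1 = r := by
    unfold stepMap
    rw [mul_one, mul_one, add_comm, mul_div_assoc, div_self (by positivity), mul_one]
  calc stepMap r x y ≤ stepMap r 1 1 :=
        stepMap_mono hr₀ hr₁ hx (Set.right_mem_Icc.2 zero_le_one) hy hx.2 hy.2
    _ = r := h11
    _ ≤ 1 := hr₁

lemma stepMap_self_le {t : ℝ} (hr : 0 ≤ r) (ht : 0 ≤ t) (h : r ^ 2 + r - 1 ≤ r * t ^ 2) :
    stepMap r t t ≤ t := by
  unfold stepMap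
  rw [div_le_iff₀ (by positivity)]
  nlinarith [mul_nonneg ht (sub_nonneg.2 h)]

end stepMap

lemma sq_add_sub_one_le_mul_sq {r : ℝ} (hr₀ : 0 ≤ r) (hr₁ : r ≤ 1) :
    r ^ 2 + r - 1 ≤ r * (2 * r ^ 2 / (1 + r ^ 2)) ^ 2 := by
  rw [div_pow, mul_div_assoc', le_div_iff₀ (by positivity)]
  -- `4 r⁵ - (r² + r - 1) (1 + r²)² = (1 - r)² (1 + r + 2 r² + r³ - r⁴)`
  have hquartic : 0 ≤ 1 + r + 2 * r ^ 2 + r ^ 3 - r ^ 4 := by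
    nlinarith [mul_nonneg (pow_nonneg hr₀ 3) (sub_nonneg.2 hr₁)]
  nlinarith [mul_nonneg (sq_nonneg (1 - r)) hquartic]

theorem stmt_12 (r : ℝ) (hr0 : 0 < r) (hr1 : r ≤ 1) (a : ℕ → ℝ)
    (ha2 : a 2 = 2 * r ^ 2 / (1 + r ^ 2)) (ha3 : a 3 = 2 * r ^ 2 / (1 + r ^ 2))
    (harec : ∀ n, 3 ≤ n → a (n + 1) = r * (r * a (n - 1) + a n) / (1 + r * a (n - 1) * a n)) :
    ∀ n, 2 ≤ n → a (n + 1) ≤ a n := by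
  set t := 2 * r ^ 2 / (1 + r ^ 2)
  have ht : t ∈ Set.Icc (0 : ℝ) 1 :=
    ⟨by positivity, (div_le_one (by positivity)).2 (by nlinarith [sq_nonneg (1 - r)])⟩
  have hrec : ∀ k, a (k + 2 + 2) = stepMap r (a (k + 2)) (a (k + 2 + 1)) :=
    fun k => harec (k + 3) (by omega)
  have h4 : a 4 = stepMap r t t := by rw [hrec 0, ha2, ha3]
  have hanti : Antitone fun k => a (k + 2) :=
    antitone_of_monotone_recurrence (fun _ hx _ hy => stepMap_mem_Icc hr0.le hr1 hx hy)
      (fun _ hx₁ _ hx₂ _ hy₁ _ _ hx hy => stepMap_mono hr0.le hr1 hx₁ hx₂ hy₁ hx hy) hrec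
      (ha2 ▸ ht) (ha3 ▸ ht) (by rw [ha2, ha3])
      (by rw [h4, ha3]; exact stepMap_self_le hr0.le ht.1 (sq_add_sub_one_le_mul_sq hr0.le hr1))
  intro n hn
  obtain ⟨k, rfl⟩ := Nat.exists_eq_add_of_le' hn
  exact hanti k.le_succ
end

section
/- Fix r ∈ (0,1] and define a₂ = a₃ = 2r²/(1 + r²), a_{n+1} = r·(r·a_{n-1} + a_n)/(1 + r·a_{n-1}·a_n) for n ≥ 3. If r ≤ (-1 + √5)/2 then lim_{n→∞} a_n = 0, while if r > (-1 + √5)/2 then lim_{n→∞} a_n = √(r + 1 - 1/r). -/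
/-!
Write `a (n + 1) = recStep r (a (n - 1)) (a n)`. On `[0, 1]²` the map `recStep r` is increasing in
its first argument, and the condition `0 < y ≤ x ≤ 1`, `recStep r x y ≤ y` on consecutive terms
`(x, y)` passes to the next pair `(y, z)`, `z = recStep r x y`: by monotonicity
`z ≥ recStep r y y`, an explicit identity shows that the next step from `(y, recStep r y y)` does
not increase, and the defect `w * (1 + r * y * w) - r * (r * y + w)` is increasing in `w ≥ 0`.
The pair `(a 2, a 3)` satisfies the condition, so `(a n)` is eventually nonincreasing and
positive and converges to some `l ≥ 0` with `recStep r l l = l`, i.e. `l = 0` or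
`r * l ^ 2 = r ^ 2 + r - 1`. Since `recStep r y y ≤ recStep r x y ≤ y` forces
`r ^ 2 + r - 1 ≤ r * y ^ 2`, the limit is `0` exactly when `r ^ 2 + r - 1 ≤ 0`, that is when
`r ≤ (-1 + √5) / 2`.
-/

open Filter Topology

noncomputable def recStep (r x y : ℝ) : ℝ := r * (r * x + y) / (1 + r * x * y)

section recStep

variable {r x x' y w w' : ℝ}

theorem recStep_le_iff (h : 0 < 1 + r * x * y) :
    recStep r x y ≤ w ↔ r * (r * x + y) ≤ w * (1 + r * x * y) :=
  div_le_iff₀ h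

theorem recStep_le_recStep_left (hr : 0 ≤ r) (hx : 0 ≤ x) (hy : 0 ≤ y) (hy1 : y ≤ 1)
    (hxx' : x ≤ x') : recStep r x y ≤ recStep r x' y := by
  have hx' : 0 ≤ x' := hx.trans hxx'
  unfold recStep
  rw [div_le_div_iff₀ (by positivity) (by positivity)]
  nlinarith [mul_nonneg (mul_nonneg (mul_nonneg hr hr) (sub_nonneg.2 hxx'))
    (mul_nonneg (sub_nonneg.2 hy1) (by linarith : 0 ≤ 1 + y))]

theorem recStep_self_le_iff (hr : 0 ≤ r) (hw : 0 < w) :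
    recStep r w w ≤ w ↔ r ^ 2 + r - 1 ≤ r * w ^ 2 := by
  rw [recStep_le_iff (by positivity)]
  constructor
  · intro h; nlinarith
  · intro h; nlinarith

theorem recStep_self_eq_self_iff (hr : 0 ≤ r) {l : ℝ} :
    recStep r l l = l ↔ l = 0 ∨ r * l ^ 2 = r ^ 2 + r - 1 := by
  have hD : 0 < 1 + r * l * l := by nlinarith [mul_nonneg hr (mul_self_nonneg l)]
  unfold recStep
  rw [div_eq_iff hD.ne', eq_comm, ← sub_eq_zero,
    show l * (1 + r * l * l) - r * (r * l + l) = l * (r * l ^ 2 - (r ^ 2 + r - 1)) by ring,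
    mul_eq_zero, sub_eq_zero]

theorem recStep_nonneg (hr : 0 ≤ r) (hx : 0 ≤ x) (hy : 0 ≤ y) : 0 ≤ recStep r x y := by
  unfold recStep; positivity

theorem recStep_le_of_le (hr : 0 ≤ r) (hr1 : r ≤ 1) (hy : 0 ≤ y) (hw : 0 ≤ w) (hww' : w ≤ w')
    (h : recStep r y w ≤ w) : recStep r y w' ≤ w' := by
  have hw' : 0 ≤ w' := hw.trans hww'
  rw [recStep_le_iff (by positivity)] at h ⊢
  nlinarith [mul_nonneg (sub_nonneg.2 hww')
    (by positivity : 0 ≤ 1 - r + r * y * (w + w'))]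

theorem recStep_recStep_self_le (hr : 0 ≤ r) (hy : 0 ≤ y) (hry : r * y ≤ 1)
    (h : recStep r y y ≤ y) : recStep r y (recStep r y y) ≤ recStep r y y := by
  set z := recStep r y y
  have hD : 0 < 1 + r * y * y := by positivity
  have hzD : z * (1 + r * y * y) = r * (r * y + y) := div_mul_cancel₀ _ hD.ne'
  rw [recStep_le_iff (by positivity)] at h
  have hz0 : 0 ≤ z := recStep_nonneg hr hy hy
  rw [recStep_le_iff (by positivity)]
  have key : (z * (1 + r * y * z) - r * (r * y + z)) * (1 + r * y * y) ^ 2 =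
      r * (1 - (r * y) ^ 2) * (y * (1 + r * y * y) - r * (r * y + y)) := by
    linear_combination (1 + r * y * y + r * y * (z * (1 + r * y * y) + r * (r * y + y))
      - r * (1 + r * y * y)) * hzD
  have : 0 ≤ (z * (1 + r * y * z) - r * (r * y + z)) * (1 + r * y * y) ^ 2 := by
    rw [key]
    exact mul_nonneg (mul_nonneg hr (by nlinarith [mul_nonneg hr hy])) (by linarith)
  exact sub_nonneg.1 (nonneg_of_mul_nonneg_left this (by positivity))

theorem recStep_recStep_le (hr : 0 ≤ r) (hr1 : r ≤ 1) (hy : 0 ≤ y) (hyx : y ≤ x) (hx1 : x ≤ 1)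
    (h : recStep r x y ≤ y) : recStep r y (recStep r x y) ≤ recStep r x y := by
  have hy1 : y ≤ 1 := hyx.trans hx1
  have hdiag : recStep r y y ≤ recStep r x y := recStep_le_recStep_left hr hy hy hy1 hyx
  exact recStep_le_of_le hr hr1 hy (recStep_nonneg hr hy hy) hdiag
    (recStep_recStep_self_le hr hy (by nlinarith) (hdiag.trans h))

theorem continuousAt_recStep (h : 1 + r * x * y ≠ 0) :
    ContinuousAt (Function.uncurry (recStep r)) (x, y) := by
  unfold recStep Function.uncurry
  fun_prop (disch := exact h)

end recStep

structure RecInvariant (r x y : ℝ) : Prop where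
  pos : 0 < y
  le : y ≤ x
  le_one : x ≤ 1
  recStep_le : recStep r x y ≤ y

namespace RecInvariant

variable {r x y : ℝ}

theorem next (hr : 0 < r) (hr1 : r ≤ 1) (h : RecInvariant r x y) :
    RecInvariant r y (recStep r x y) where
  pos := by
    have hy := h.pos
    have hx := hy.trans_le h.le
    unfold recStep; positivity
  le := h.recStep_le
  le_one := h.le.trans h.le_one
  recStep_le := recStep_recStep_le hr.le hr1 h.pos.le h.le h.le_one h.recStep_le

theorem le_mul_sq (hr : 0 < r) (h : RecInvariant r x y) : r ^ 2 + r - 1 ≤ r * y ^ 2 :=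
  (recStep_self_le_iff hr.le h.pos).1 <|
    (recStep_le_recStep_left hr.le h.pos.le h.pos.le (h.le.trans h.le_one) h.le).trans h.recStep_le

end RecInvariant

theorem recInvariant_start {r : ℝ} (hr0 : 0 < r) (hr1 : r ≤ 1) :
    RecInvariant r (2 * r ^ 2 / (1 + r ^ 2)) (2 * r ^ 2 / (1 + r ^ 2)) := by
  have hpos : 0 < 2 * r ^ 2 / (1 + r ^ 2) := by positivity
  refine ⟨hpos, le_rfl, (div_le_one (by positivity)).2 (by nlinarith), ?_⟩
  rw [recStep_self_le_iff hr0.le hpos, div_pow, mul_div_assoc', le_div_iff₀ (by positivity)]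
  have : 0 ≤ (1 - r) ^ 2 * (1 + r + 2 * r ^ 2 + r ^ 3 - r ^ 4) :=
    mul_nonneg (sq_nonneg _) (by nlinarith [pow_le_one₀ hr0.le hr1 (n := 3), pow_pos hr0 3])
  nlinarith

theorem golden_lt_iff {r : ℝ} (hr : 0 ≤ r) : (-1 + √5) / 2 < r ↔ 0 < r ^ 2 + r - 1 := by
  have hfactor : r ^ 2 + r - 1 = (r - (-1 + √5) / 2) * (r + (1 + √5) / 2) := by
    linear_combination (1 / 4 : ℝ) * Real.sq_sqrt (show (0 : ℝ) ≤ 5 by norm_num)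
  rw [hfactor, mul_pos_iff_of_pos_right (by positivity), sub_pos]

theorem Filter.Tendsto.limit_eq_of_recurrence {X : Type*} [TopologicalSpace X] [T2Space X]
    {F : X → X → X} {b : ℕ → X} {l : X} (hb : Tendsto b atTop (𝓝 l))
    (hF : ContinuousAt (Function.uncurry F) (l, l)) (hrec : ∀ k, b (k + 2) = F (b k) (b (k + 1))) :
    F l l = l := by
  have hpair : Tendsto (fun k => (b k, b (k + 1))) atTop (𝓝 (l, l)) :=
    hb.prodMk_nhds (hb.comp (tendsto_add_atTop_nat 1))
  exact tendsto_nhds_unique ((hF.tendsto.comp hpair).congr fun k => (hrec k).symm)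
    (hb.comp (tendsto_add_atTop_nat 2))

theorem eq_sqrt_of_mul_sq_eq {r l : ℝ} (hr : 0 < r) (hl : 0 ≤ l) (h : r * l ^ 2 = r ^ 2 + r - 1) :
    l = √(r + 1 - 1 / r) := by
  rw [show r + 1 - 1 / r = l ^ 2 by field_simp; linarith, Real.sqrt_sq hl]

theorem stmt_13 (r : ℝ) (hr0 : 0 < r) (hr1 : r ≤ 1) (a : ℕ → ℝ)
    (ha2 : a 2 = 2 * r ^ 2 / (1 + r ^ 2)) (ha3 : a 3 = 2 * r ^ 2 / (1 + r ^ 2))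
    (harec : ∀ n, 3 ≤ n → a (n + 1) = r * (r * a (n - 1) + a n) / (1 + r * a (n - 1) * a n)) :
    (r ≤ (-1 + Real.sqrt 5) / 2 → Tendsto a atTop (nhds 0)) ∧
    ((-1 + Real.sqrt 5) / 2 < r → Tendsto a atTop (nhds (Real.sqrt (r + 1 - 1 / r)))) := by
  set b : ℕ → ℝ := fun k => a (k + 2)
  have hrec (k : ℕ) : b (k + 2) = recStep r (b k) (b (k + 1)) := harec (k + 3) (by omega)
  have hinv (k : ℕ) : RecInvariant r (b k) (b (k + 1)) := by
    induction k with
    | zero => simpa only [b, ha2, ha3] using recInvariant_start hr0 hr1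
    | succ k ih => rw [hrec]; exact ih.next hr0 hr1
  have hb0 (k : ℕ) : 0 ≤ b k := (hinv k).pos.le.trans (hinv k).le
  obtain ⟨l, hl⟩ : ∃ l, Tendsto b atTop (𝓝 l) :=
    ⟨_, tendsto_atTop_ciInf (antitone_nat_of_succ_le fun k => (hinv k).le)
      ⟨0, Set.forall_mem_range.2 hb0⟩⟩
  have hl0 : 0 ≤ l := ge_of_tendsto' hl hb0
  have hfix : l = 0 ∨ r * l ^ 2 = r ^ 2 + r - 1 := (recStep_self_eq_self_iff hr0.le).1 <|
    hl.limit_eq_of_recurrence (continuousAt_recStep (by positivity)) hrec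
  have hbound : r ^ 2 + r - 1 ≤ r * l ^ 2 :=
    ge_of_tendsto' (((hl.comp (tendsto_add_atTop_nat 1)).pow 2).const_mul r)
      fun k => (hinv k).le_mul_sq hr0
  have ha : Tendsto a atTop (𝓝 l) := (tendsto_add_atTop_iff_nat 2).1 hl
  rw [← not_lt, golden_lt_iff hr0.le, not_lt]
  refine ⟨fun hneg => ?_, fun hpos => ?_⟩
  · obtain rfl : l = 0 :=
      hfix.elim id fun h => pow_eq_zero_iff two_ne_zero |>.1 (by nlinarith [sq_nonneg l])
    exact ha
  · have hl_ne : l ≠ 0 := by rintro rfl; linarith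
    rwa [eq_sqrt_of_mul_sq_eq hr0 hl0 (hfix.resolve_left hl_ne)] at ha
end

section
/- Let αₙ = Φₙ(0) be a sequence of complex numbers with Φ₁(0) = α, |Φ₂(0)| ≤ 2r²/(1+r²), |Φ₃(0)| ≤ 2r²/(1+r²), and suppose that for each n ≥ 3 there is a complex number ζ with |ζ| ≤ r ≤ 1 such that Φ_{n+1}(0) = -ζ·(ζ·Φ_{n-1}(0) + Φ_n(0))/(1 + ζ·Φ_{n-1}(0)·conj(Φ_n(0))), and all these quantities have modulus < 1. Then |Φ_{n+1}(0)| ≤ r·(r·|Φ_{n-1}(0)| + |Φ_n(0)|)/(1 + r·|Φ_{n-1}(0)|·|Φ_n(0)|) for all n ≥ 3, and consequently |Φ_{n+1}(0)| ≤ a_n for n ≥ 2, where a₂ = a₃ = 2r²/(1+r²) and a_{n+1} = r(r·a_{n-1} + a_n)/(1 + r·a_{n-1}·a_n). -/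
/-!
On the closed unit disc the Möbius-type map satisfies
`|a + c| / |1 + a c̄| ≤ (|a| + |c|) / (1 + |a| |c|)`: after squaring, the difference of the two sides
is `2 (1 - |a|²) (1 - |c|²) (|a| |c| - Re (a c̄))`. Applied to `a = ζ Φₙ₋₁(0)`, `c = Φₙ(0)`, this
bounds `|Φₙ₊₁(0)|` by `f(|ζ|, |Φₙ₋₁(0)|, |Φₙ(0)|)` with `f(s, x, y) = s (s x + y) / (1 + s x y)`,
and `f` is increasing in `s ≥ 0`, which gives the first bound. On `[0, 1]²` the map `f(r, ·, ·)` is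
increasing in both arguments and takes values in `[0, 1]`, so the bounds propagate along the
recursion by a two-step induction; it starts because `f(r, c, c) ≤ c` for `c = 2r² / (1 + r²)`.
-/

open ComplexConjugate

theorem Complex.norm_add_div_norm_one_add_mul_conj_le {a c : ℂ} (ha : ‖a‖ ≤ 1) (hc : ‖c‖ ≤ 1) :
    ‖a + c‖ / ‖1 + a * conj c‖ ≤ (‖a‖ + ‖c‖) / (1 + ‖a‖ * ‖c‖) := by
  rcases (norm_nonneg (1 + a * conj c)).eq_or_lt with hD | hD
  · rw [← hD, div_zero]
    positivity
  set d := (a * conj c).re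
  have hd : d ≤ ‖a‖ * ‖c‖ := by
    simpa only [norm_mul, Complex.norm_conj] using Complex.re_le_norm (a * conj c)
  have hnum : ‖a + c‖ ^ 2 = ‖a‖ ^ 2 + ‖c‖ ^ 2 + 2 * d := by
    simp only [Complex.sq_norm, Complex.normSq_add, d]
  have hden : ‖1 + a * conj c‖ ^ 2 = 1 + ‖a‖ ^ 2 * ‖c‖ ^ 2 + 2 * d := by
    simp only [Complex.sq_norm, Complex.normSq_add, Complex.normSq_one, Complex.normSq_mul,
      Complex.normSq_conj, one_mul, Complex.conj_re, d]
  have hsq : (‖a + c‖ * (1 + ‖a‖ * ‖c‖)) ^ 2 ≤ ((‖a‖ + ‖c‖) * ‖1 + a * conj c‖) ^ 2 := by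
    have h1a : 0 ≤ 1 - ‖a‖ ^ 2 := by nlinarith [norm_nonneg a]
    have h1c : 0 ≤ 1 - ‖c‖ ^ 2 := by nlinarith [norm_nonneg c]
    have hdiff : ((‖a‖ + ‖c‖) * ‖1 + a * conj c‖) ^ 2 - (‖a + c‖ * (1 + ‖a‖ * ‖c‖)) ^ 2
        = 2 * (1 - ‖a‖ ^ 2) * (1 - ‖c‖ ^ 2) * (‖a‖ * ‖c‖ - d) := by
      rw [mul_pow, mul_pow, hnum, hden]
      ring
    rw [← sub_nonneg, hdiff]
    exact mul_nonneg (mul_nonneg (mul_nonneg zero_le_two h1a) h1c) (sub_nonneg.2 hd)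
  rw [div_le_div_iff₀ hD (by positivity)]
  exact (pow_le_pow_iff_left₀ (by positivity) (by positivity) two_ne_zero).1 hsq

noncomputable def comparisonStep (r x y : ℝ) : ℝ := r * (r * x + y) / (1 + r * x * y)

theorem comparisonStep_mono_param {ρ r x y : ℝ} (hρ : 0 ≤ ρ) (hρr : ρ ≤ r) (hx : 0 ≤ x)
    (hy : 0 ≤ y) : comparisonStep ρ x y ≤ comparisonStep r x y := by
  have hr : 0 ≤ r := hρ.trans hρr
  unfold comparisonStep
  rw [div_le_div_iff₀ (by positivity) (by positivity), ← sub_nonneg]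
  have hfactor : r * (r * x + y) * (1 + ρ * x * y) - ρ * (ρ * x + y) * (1 + r * x * y)
      = (r - ρ) * ((r + ρ) * x + y + r * ρ * x ^ 2 * y) := by ring
  rw [hfactor]
  exact mul_nonneg (sub_nonneg.2 hρr) (by positivity)

theorem comparisonStep_mono_fst {r x X y : ℝ} (hr : 0 ≤ r) (hx : 0 ≤ x) (hxX : x ≤ X)
    (hy : 0 ≤ y) (hy1 : y ≤ 1) : comparisonStep r x y ≤ comparisonStep r X y := by
  have hX : 0 ≤ X := hx.trans hxX
  unfold comparisonStep
  rw [div_le_div_iff₀ (by positivity) (by positivity), ← sub_nonneg]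
  have hfactor : r * (r * X + y) * (1 + r * x * y) - r * (r * x + y) * (1 + r * X * y)
      = r ^ 2 * (1 - y ^ 2) * (X - x) := by ring
  rw [hfactor]
  have : 0 ≤ 1 - y ^ 2 := by nlinarith
  exact mul_nonneg (mul_nonneg (sq_nonneg r) this) (sub_nonneg.2 hxX)

theorem comparisonStep_mono_snd {r x y Y : ℝ} (hr : 0 ≤ r) (hx : 0 ≤ x) (hrx : r * x ≤ 1)
    (hy : 0 ≤ y) (hyY : y ≤ Y) : comparisonStep r x y ≤ comparisonStep r x Y := by
  have hY : 0 ≤ Y := hy.trans hyY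
  unfold comparisonStep
  rw [div_le_div_iff₀ (by positivity) (by positivity), ← sub_nonneg]
  have hfactor : r * (r * x + Y) * (1 + r * x * y) - r * (r * x + y) * (1 + r * x * Y)
      = r * (1 - (r * x) ^ 2) * (Y - y) := by ring
  rw [hfactor]
  have : 0 ≤ 1 - (r * x) ^ 2 := by nlinarith [mul_nonneg hr hx]
  exact mul_nonneg (mul_nonneg hr this) (sub_nonneg.2 hyY)

theorem comparisonStep_mono {r x X y Y : ℝ} (hr : 0 ≤ r) (hr1 : r ≤ 1) (hx : 0 ≤ x)
    (hxX : x ≤ X) (hX1 : X ≤ 1) (hy : 0 ≤ y) (hyY : y ≤ Y) (hY1 : Y ≤ 1) :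
    comparisonStep r x y ≤ comparisonStep r X Y :=
  have hX : 0 ≤ X := hx.trans hxX
  (comparisonStep_mono_fst hr hx hxX hy (hyY.trans hY1)).trans
    (comparisonStep_mono_snd hr hX (mul_le_one₀ hr1 hX hX1) hy hyY)

theorem comparisonStep_le_one {r x y : ℝ} (hr : 0 ≤ r) (hr1 : r ≤ 1) (hx : 0 ≤ x) (hx1 : x ≤ 1)
    (hy : 0 ≤ y) (hy1 : y ≤ 1) : comparisonStep r x y ≤ 1 := by
  refine (comparisonStep_mono_param hr hr1 hx hy).trans ?_
  unfold comparisonStep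
  rw [div_le_one (by positivity)]
  nlinarith [mul_nonneg (sub_nonneg.2 hx1) (sub_nonneg.2 hy1)]

theorem two_mul_sq_div_one_add_sq_le_one {r : ℝ} (hr : 0 ≤ r) (hr1 : r ≤ 1) :
    2 * r ^ 2 / (1 + r ^ 2) ≤ 1 := by
  rw [div_le_one (by positivity)]
  nlinarith

theorem comparisonStep_two_mul_sq_div_le {r : ℝ} (hr : 0 ≤ r) (hr1 : r ≤ 1) :
    comparisonStep r (2 * r ^ 2 / (1 + r ^ 2)) (2 * r ^ 2 / (1 + r ^ 2))
      ≤ 2 * r ^ 2 / (1 + r ^ 2) := by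
  have hkey : 0 ≤ (1 - r) ^ 2 * (1 + r + 2 * r ^ 2 + r ^ 3 - r ^ 4) := by
    have : r ^ 4 ≤ r ^ 3 := by nlinarith [pow_nonneg hr 3]
    nlinarith [sq_nonneg (1 - r)]
  unfold comparisonStep
  rw [div_le_iff₀ (by positivity)]
  field_simp
  nlinarith [mul_nonneg (pow_nonneg hr 2) hkey]

theorem norm_neg_mul_div_one_add_mul_conj_le {r : ℝ} (hr : r ≤ 1) {ζ u v : ℂ} (hζ : ‖ζ‖ ≤ r)
    (hu : ‖u‖ ≤ 1) (hv : ‖v‖ ≤ 1) :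
    ‖-ζ * (ζ * u + v) / (1 + ζ * u * conj v)‖ ≤ comparisonStep r ‖u‖ ‖v‖ := by
  have hζu : ‖ζ * u‖ = ‖ζ‖ * ‖u‖ := norm_mul ζ u
  have hmob := Complex.norm_add_div_norm_one_add_mul_conj_le
    (hζu ▸ mul_le_one₀ (hζ.trans hr) (norm_nonneg u) hu) hv
  calc ‖-ζ * (ζ * u + v) / (1 + ζ * u * conj v)‖
      = ‖ζ‖ * (‖ζ * u + v‖ / ‖1 + ζ * u * conj v‖) := by
        rw [norm_div, norm_mul, norm_neg, mul_div_assoc]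
    _ ≤ ‖ζ‖ * ((‖ζ‖ * ‖u‖ + ‖v‖) / (1 + ‖ζ‖ * ‖u‖ * ‖v‖)) := by
        rw [hζu] at hmob
        gcongr
    _ = comparisonStep ‖ζ‖ ‖u‖ ‖v‖ := (mul_div_assoc _ _ _).symm
    _ ≤ comparisonStep r ‖u‖ ‖v‖ :=
        comparisonStep_mono_param (norm_nonneg ζ) hζ (norm_nonneg u) (norm_nonneg v)

theorem le_of_comparisonStep_recursion {r : ℝ} (hr : 0 ≤ r) (hr1 : r ≤ 1) {x A : ℕ → ℝ}
    (hx : ∀ k, 0 ≤ x k) (hxrec : ∀ k, x (k + 2) ≤ comparisonStep r (x k) (x (k + 1)))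
    (hArec : ∀ k, A (k + 2) = comparisonStep r (A k) (A (k + 1)))
    (h0 : x 0 ≤ A 0) (hA0 : A 0 ≤ 1) (h1 : x 1 ≤ A 1) (hA1 : A 1 ≤ 1) (k : ℕ) :
    x k ≤ A k := by
  suffices ∀ k, (x k ≤ A k ∧ A k ≤ 1) ∧ (x (k + 1) ≤ A (k + 1) ∧ A (k + 1) ≤ 1) from
    (this k).1.1
  intro k
  induction k with
  | zero => exact ⟨⟨h0, hA0⟩, h1, hA1⟩
  | succ k ih =>
    obtain ⟨⟨hxA, hA⟩, hxA', hA'⟩ := ih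
    refine ⟨⟨hxA', hA'⟩, ?_, ?_⟩
    · rw [hArec]
      exact (hxrec k).trans (comparisonStep_mono hr hr1 (hx k) hxA hA (hx _) hxA' hA')
    · rw [hArec]
      exact comparisonStep_le_one hr hr1 ((hx k).trans hxA) hA ((hx _).trans hxA') hA'

theorem stmt_16_general (r : ℝ) (hr : r ≤ 1) (b : ℕ → ℂ)
    (hb2 : ‖b 2‖ ≤ 2 * r ^ 2 / (1 + r ^ 2))
    (hb3 : ‖b 3‖ ≤ 2 * r ^ 2 / (1 + r ^ 2))
    (hmod : ∀ n, ‖b n‖ < 1)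
    (hrec : ∀ n, 3 ≤ n → ∃ ζ : ℂ, ‖ζ‖ ≤ r ∧
      b (n + 1) = -ζ * (ζ * b (n - 1) + b n) / (1 + ζ * b (n - 1) * (starRingEnd ℂ) (b n))) :
    (∀ n, 3 ≤ n → ‖b (n + 1)‖ ≤
        r * (r * ‖b (n - 1)‖ + ‖b n‖)
          / (1 + r * ‖b (n - 1)‖ * ‖b n‖)) ∧
    ∀ a : ℕ → ℝ, a 2 = 2 * r ^ 2 / (1 + r ^ 2) → a 3 = 2 * r ^ 2 / (1 + r ^ 2) →
      (∀ n, 3 ≤ n → a (n + 1) = r * (r * a (n - 1) + a n) / (1 + r * a (n - 1) * a n)) →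
      ∀ n, 2 ≤ n → ‖b (n + 1)‖ ≤ a n := by
  have hr0 : 0 ≤ r := by
    obtain ⟨ζ, hζ, -⟩ := hrec 3 le_rfl
    exact (norm_nonneg ζ).trans hζ
  have hstep : ∀ n, 3 ≤ n → ‖b (n + 1)‖ ≤ comparisonStep r ‖b (n - 1)‖ ‖b n‖ := by
    intro n hn
    obtain ⟨ζ, hζ, hb⟩ := hrec n hn
    exact hb ▸ norm_neg_mul_div_one_add_mul_conj_le hr hζ (hmod _).le (hmod _).le
  refine ⟨hstep, fun a ha2 ha3 ha n hn => ?_⟩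
  have hc1 := two_mul_sq_div_one_add_sq_le_one hr0 hr
  have hb4 : ‖b 4‖ ≤ a 3 := ha3 ▸ calc
    ‖b 4‖ ≤ comparisonStep r ‖b 2‖ ‖b 3‖ := hstep 3 le_rfl
    _ ≤ comparisonStep r (2 * r ^ 2 / (1 + r ^ 2)) (2 * r ^ 2 / (1 + r ^ 2)) :=
      comparisonStep_mono hr0 hr (norm_nonneg _) hb2 hc1 (norm_nonneg _) hb3 hc1
    _ ≤ 2 * r ^ 2 / (1 + r ^ 2) := comparisonStep_two_mul_sq_div_le hr0 hr
  obtain ⟨k, rfl⟩ := Nat.exists_eq_add_of_le' hn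
  exact (le_of_comparisonStep_recursion (x := fun k => ‖b (k + 3)‖) (A := fun k => a (k + 2))
    hr0 hr (fun _ => norm_nonneg _) (fun k => hstep (k + 4) (by omega))
    (fun k => ha (k + 3) (by omega)) (ha2 ▸ hb3) (ha2 ▸ hc1) hb4 (ha3 ▸ hc1) k)

theorem stmt_16 (r : ℝ) (hr : r ≤ 1) (α : ℂ) (b : ℕ → ℂ)
    (hb1 : b 1 = α)
    (hb2 : ‖b 2‖ ≤ 2 * r ^ 2 / (1 + r ^ 2))
    (hb3 : ‖b 3‖ ≤ 2 * r ^ 2 / (1 + r ^ 2))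
    (hmod : ∀ n, ‖b n‖ < 1)
    (hrec : ∀ n, 3 ≤ n → ∃ ζ : ℂ, ‖ζ‖ ≤ r ∧
      b (n + 1) = -ζ * (ζ * b (n - 1) + b n) / (1 + ζ * b (n - 1) * (starRingEnd ℂ) (b n))) :
    (∀ n, 3 ≤ n → ‖b (n + 1)‖ ≤
        r * (r * ‖b (n - 1)‖ + ‖b n‖)
          / (1 + r * ‖b (n - 1)‖ * ‖b n‖)) ∧
    ∀ a : ℕ → ℝ, a 2 = 2 * r ^ 2 / (1 + r ^ 2) → a 3 = 2 * r ^ 2 / (1 + r ^ 2) →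
      (∀ n, 3 ≤ n → a (n + 1) = r * (r * a (n - 1) + a n) / (1 + r * a (n - 1) * a n)) →
      ∀ n, 2 ≤ n → ‖b (n + 1)‖ ≤ a n :=
  stmt_16_general r hr b hb2 hb3 hmod hrec
end
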